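/- Let $p>1$ and let $(v,w)$ be a pair of weights with joint constant $[v,w]_{A_p^+}<\infty$ and $\sigma=w^{-1/(p-1)}$. Suppose $a<b<c<d$ with $b=a+\frac{d-a}{3}$ and $c=a+\frac{2}{3}(d-a)$, and suppose $r_\sigma>1$ satisfies the reverse Hölder inequality $\left(\int_c^d \sigma^{r_\sigma}\right)^{1/r_\sigma}\leq 2^{1/r_\sigma}(c-b)^{-(r_\sigma-1)/r_\sigma}\int_b^d\sigma$, and let $r$ satisfy $\frac{p-1}{p/r-1}=r_\sigma$. Then $\int_a^b v\left(\int_c^d \sigma^{r_\sigma}\right)^{(p-1)/r_\sigma}\leq 6^{p-1}(d-a)^{p/r}[v,w]_{A_p^+}$, i.e. the gapped $A_{p/r}^+$ condition holds with constant $6^{p-1}[v,w]_{A_p^+}$. -/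

import Mathlib

open MeasureTheory Real Set

/-!
Apply the `A_p^+` condition to the triple `a < b < d`: this bounds `∫_a^b v · (∫_b^d σ)^{p-1}`
by `K (d-a)^p`. The reverse Hölder inequality, raised to the power `p - 1`, bounds
`(∫_c^d σ^{r_σ})^{(p-1)/r_σ}` by a multiple of `(∫_b^d σ)^{p-1}`. Since `(p-1)/r_σ = p/r - 1`,
the powers of `d - a` combine to `(d-a)^{p/r}` and the numerical factor is
`2^{p/r-1} 3^{p-p/r} ≤ 6^{p-1}`.
-/

namespace Real

theorem one_div_mul_mul_one_div_mul_rpow_sub_one {L V S : ℝ} (hL : 0 < L) (hS : 0 ≤ S)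
    (p : ℝ) : (1 / L * V) * (1 / L * S) ^ (p - 1) = V * S ^ (p - 1) / L ^ p := by
  rw [mul_rpow (by positivity) hS, one_div, inv_rpow hL.le, rpow_sub_one hL.ne']
  field_simp

theorem rpow_div_le_mul_rpow_of_rpow_one_div_le {X A Y s q : ℝ} (hX : 0 ≤ X) (hA : 0 ≤ A)
    (hY : 0 ≤ Y) (hq : 0 ≤ q) (h : X ^ (1 / s) ≤ A * Y) : X ^ (q / s) ≤ A ^ q * Y ^ q := by
  have := rpow_le_rpow (rpow_nonneg hX _) h hq
  rwa [← rpow_mul hX, one_div_mul_eq_div, mul_rpow hA hY] at this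

theorem two_rpow_mul_third_rpow_rpow_mul_rpow_eq {L s p u : ℝ} (hL : 0 < L) (hs : s ≠ 0)
    (hu : (p - 1) / s = u - 1) :
    (2 ^ (1 / s) * (L / 3) ^ (-((s - 1) / s))) ^ (p - 1) * L ^ p =
      2 ^ (u - 1) * 3 ^ (p - u) * L ^ u := by
  have hexp : -((s - 1) / s) * (p - 1) = u - p := by
    rw [show -((s - 1) / s) * (p - 1) = (p - 1) / s - (p - 1) by field_simp; ring, hu]
    ring
  rw [mul_rpow (by positivity) (by positivity), ← rpow_mul zero_le_two,
    ← rpow_mul (by positivity), one_div_mul_eq_div, hu, hexp,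
    div_rpow hL.le zero_le_three, mul_assoc, div_mul_eq_mul_div, ← rpow_add hL,
    sub_add_cancel, div_eq_mul_inv, ← rpow_neg zero_le_three, neg_sub]
  ring

theorem two_rpow_mul_three_rpow_le_six_rpow {u p : ℝ} (h1 : 1 ≤ u) (h2 : u ≤ p) :
    (2 : ℝ) ^ (u - 1) * 3 ^ (p - u) ≤ 6 ^ (p - 1) := by
  rw [show (6 : ℝ) = 2 * 3 by norm_num, mul_rpow zero_le_two zero_le_three]
  gcongr <;> linarith

end Real

/-- **Gapped `A_{p/r}^+` estimate in the openness lemma.** For `a < b < c < d` with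
`b = a + (d-a)/3` and `c = a + 2(d-a)/3`, if `σ = w^{-1/(p-1)}` satisfies the reverse
Hölder inequality with exponent `r_σ = (p-1)/(p/r-1) > 1` on `(b,d)` and `(v,w)` has
joint `A_p^+` constant at most `K`, then
`∫_a^b v (∫_c^d σ^{r_σ})^{(p-1)/r_σ} ≤ 6^{p-1} (d-a)^{p/r} K`. -/
theorem gapped_Apr_estimate
    (p r rσ : ℝ) (hp : 1 < p) (hr1 : 1 < r) (hrp : r < p)
    (hrσ : (p - 1) / (p / r - 1) = rσ) (hrσ1 : 1 < rσ)
    (v w : ℝ → ℝ) (hv : ∀ x, 0 ≤ v x) (hw : ∀ x, 0 ≤ w x)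
    (σ : ℝ → ℝ) (hσ : ∀ x, σ x = (w x) ^ (-(1 / (p - 1))))
    (K : ℝ) (hK : 0 ≤ K)
    (hAp : ∀ a b c : ℝ, a < b → b < c →
      (1 / (c - a) * ∫ x in a..b, v x) *
        (1 / (c - a) * ∫ x in b..c, σ x) ^ (p - 1) ≤ K)
    (a b c d : ℝ) (hab : a < b) (hbc : b < c) (hcd : c < d)
    (hb : b = a + (d - a) / 3) (hc : c = a + 2 / 3 * (d - a))
    (hRH : (∫ x in c..d, (σ x) ^ rσ) ^ (1 / rσ) ≤
      2 ^ (1 / rσ) * (c - b) ^ (-((rσ - 1) / rσ)) * ∫ x in b..d, σ x) :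
    (∫ x in a..b, v x) * (∫ x in c..d, (σ x) ^ rσ) ^ ((p - 1) / rσ) ≤
      6 ^ (p - 1) * (d - a) ^ (p / r) * K := by
  have hL : 0 < d - a := by linarith
  have hσ0 (x : ℝ) : 0 ≤ σ x := hσ x ▸ rpow_nonneg (hw x) _
  set V := ∫ x in a..b, v x
  set S := ∫ x in b..d, σ x
  set I := ∫ x in c..d, (σ x) ^ rσ
  have hV : 0 ≤ V := intervalIntegral.integral_nonneg hab.le fun x _ ↦ hv x
  have hS : 0 ≤ S := intervalIntegral.integral_nonneg (hbc.trans hcd).le fun x _ ↦ hσ0 x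
  have hI : 0 ≤ I := intervalIntegral.integral_nonneg hcd.le fun x _ ↦ rpow_nonneg (hσ0 x) _
  have hexp : (p - 1) / rσ = p / r - 1 := by rw [← hrσ, div_div_cancel₀ (sub_pos.2 hp).ne']
  have hVS : V * S ^ (p - 1) ≤ K * (d - a) ^ p := by
    have := hAp a b d hab (hbc.trans hcd)
    rwa [one_div_mul_mul_one_div_mul_rpow_sub_one hL hS, div_le_iff₀ (by positivity)] at this
  rw [show c - b = (d - a) / 3 by rw [hb, hc]; ring] at hRH
  set F := 2 ^ (1 / rσ) * ((d - a) / 3) ^ (-((rσ - 1) / rσ))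
  have hIS : I ^ ((p - 1) / rσ) ≤ F ^ (p - 1) * S ^ (p - 1) :=
    rpow_div_le_mul_rpow_of_rpow_one_div_le hI (by positivity) hS (by linarith) hRH
  calc V * I ^ ((p - 1) / rσ)
      ≤ V * (F ^ (p - 1) * S ^ (p - 1)) := mul_le_mul_of_nonneg_left hIS hV
    _ = F ^ (p - 1) * (V * S ^ (p - 1)) := by ring
    _ ≤ F ^ (p - 1) * (K * (d - a) ^ p) := by gcongr
    _ = 2 ^ (p / r - 1) * 3 ^ (p - p / r) * (d - a) ^ (p / r) * K := by
        rw [← two_rpow_mul_third_rpow_rpow_mul_rpow_eq hL (by linarith) hexp]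
        ring
    _ ≤ 6 ^ (p - 1) * (d - a) ^ (p / r) * K := by
        gcongr
        exact two_rpow_mul_three_rpow_le_six_rpow ((one_lt_div (by linarith)).2 hrp).le
          (div_le_self (by linarith) hr1.le)
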